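/- Let k ≥ 3, ℓ ≥ 1. Let R_1,…,R_r be tensors of arity n on domain size k and G_1,…,G_g column tensors of arity n on domain size k, with given tensors R̲_i, G̲_j of arity n on domain size 2^ℓ, where R_1 is non-degenerate. Suppose σ ≠ τ in Fin k, X_{σ,τ} is a 2 × k matrix of rank 2 such that R_i = R_i^{(σ,τ)} X_{σ,τ}^{⊗n} for all i (where R_i^{(σ,τ)} is the restriction of R_i to {σ,τ}), X'_{σ,τ} is an invertible k × k matrix with X_{σ,τ}·X'_{σ,τ} = [[1,0,0,…,0],[0,1,0,…,0]], and Ř_i denotes the restriction of R_i (X'_{σ,τ})^{⊗n} to {0,1} and Ǧ_j the restriction of (X'^{-1}_{σ,τ})^{⊗n} G_j to {0,1}. If there exists a 2^ℓ × 2 complex matrix M_{(2)} of rank 2 with Ř_i = R̲_i M_{(2)}^{⊗n} for all i and M_{(2)}^{⊗n} Ǧ_j = G̲_j for all j, then the 2^ℓ × k matrix M = M_{(2)} X_{σ,τ} satisfies R_i = R̲_i M^{⊗n} for all 1 ≤ i ≤ r and M^{⊗n} G_j = G̲_j for all 1 ≤ j ≤ g. -/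

import Mathlib

open Matrix BigOperators

/-- A tensor of arity `n` on domain size `k` is degenerate if it is a tensor
product of vectors. -/
def Degenerate {n k : ℕ} (R : (Fin n → Fin k) → ℂ) : Prop :=
  ∃ v : Fin n → (Fin k → ℂ), ∀ i, R i = ∏ t, v t (i t)

/-- The recognizer transform `R̲ M^{⊗n}` of a tensor `R̲` on domain `D`
under a matrix `M` with rows indexed by `D` and columns indexed by `E`. -/
noncomputable def rtrans {n : ℕ} {D E : Type*} [Fintype D] (M : Matrix D E ℂ)
    (R : (Fin n → D) → ℂ) : (Fin n → E) → ℂ :=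
  fun i => ∑ j : Fin n → D, R j * ∏ t, M (j t) (i t)

/-- The generator transform `M^{⊗n} G` of a column tensor `G` on domain `E`
under a matrix `M` with rows indexed by `D` and columns indexed by `E`. -/
noncomputable def gtrans {n : ℕ} {D E : Type*} [Fintype E] (M : Matrix D E ℂ)
    (G : (Fin n → E) → ℂ) : (Fin n → D) → ℂ :=
  fun s => ∑ i : Fin n → E, (∏ t, M (s t) (i t)) * G i

/-- The restriction `R^{(σ,τ)}` of a tensor on domain size `k` to `{σ, τ}`. -/
def restrict {n k : ℕ} (R : (Fin n → Fin k) → ℂ) (σ τ : Fin k) :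
    (Fin n → Fin 2) → ℂ :=
  fun j => R fun t => if j t = 0 then σ else τ

/-- The submatrix `(α_σ α_τ)` formed by the columns `σ` and `τ` of `M`. -/
def subM {D : Type*} {k : ℕ} (M : Matrix D (Fin k) ℂ) (σ τ : Fin k) :
    Matrix D (Fin 2) ℂ :=
  Matrix.of fun i c => if c = 0 then M i σ else M i τ

/-- The `t`-th signature matrix `A_R(t)` of a tensor on domain size 2. -/
def sigMatrix {n : ℕ} (R : (Fin n → Fin 2) → ℂ) (t : Fin n) :
    Matrix (Fin 2) ({s : Fin n // s ≠ t} → Fin 2) ℂ :=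
  Matrix.of fun b i => R fun s => if h : s = t then b else i ⟨s, h⟩

/-- The two-column matrix `A_{σ,τ}(R)`, with rows indexed by a position `t`
and an assignment of domain values to the remaining positions. -/
def Amat {n k : ℕ} (R : (Fin n → Fin k) → ℂ) (σ τ : Fin k) :
    Matrix (Σ t : Fin n, ({s : Fin n // s ≠ t} → Fin k)) (Fin 2) ℂ :=
  Matrix.of fun p c =>
    R fun s => if h : s = p.1 then (if c = 0 then σ else τ) else p.2 ⟨s, h⟩

/-- The column vector `b_w(R)`. -/
def bvec {n k : ℕ} (R : (Fin n → Fin k) → ℂ) (w : Fin k) :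
    (Σ t : Fin n, ({s : Fin n // s ≠ t} → Fin k)) → ℂ :=
  fun p => R fun s => if h : s = p.1 then w else p.2 ⟨s, h⟩

/-- The `2 × k` matrix `[[1,0,0,…,0],[0,1,0,…,0]]`. -/
def projMat (k : ℕ) : Matrix (Fin 2) (Fin k) ℂ :=
  Matrix.of fun r c => if (r : ℕ) = (c : ℕ) then 1 else 0

/-!
Since `X * X' = projMat k` and `X'` is invertible, `X = projMat k * X'⁻¹`. Hence the
restriction to `{0, 1}` of `R_i X'^{⊗n} = R_i^{(σ,τ)} (X X')^{⊗n}` is `R_i^{(σ,τ)}` itself,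
and the restriction to `{0, 1}` of `(X'⁻¹)^{⊗n} G_j` is `X^{⊗n} G_j`. Both claims then follow
from the functoriality `(M N)^{⊗n} = M^{⊗n} N^{⊗n}` of the two transforms.
-/

section Transforms

variable {n : ℕ} {D E F : Type*}

lemma rtrans_eq_gtrans_transpose [Fintype D] (M : Matrix D E ℂ) (R : (Fin n → D) → ℂ) :
    rtrans M R = gtrans Mᵀ R := by
  funext i
  simp only [rtrans, gtrans, transpose_apply, mul_comm]

lemma gtrans_mul [Fintype E] [Fintype F] (M : Matrix D E ℂ) (N : Matrix E F ℂ)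
    (G : (Fin n → F) → ℂ) :
    gtrans (M * N) G = gtrans M (gtrans N G) := by
  funext s
  simp only [gtrans, mul_apply, Finset.prod_univ_sum, Fintype.piFinset_univ,
    Finset.mul_sum, Finset.sum_mul, Finset.prod_mul_distrib]
  rw [Finset.sum_comm]
  exact Finset.sum_congr rfl fun _ _ => Finset.sum_congr rfl fun _ _ => by ring

lemma rtrans_mul [Fintype D] [Fintype E] (M : Matrix D E ℂ) (N : Matrix E F ℂ)
    (R : (Fin n → D) → ℂ) :
    rtrans (M * N) R = rtrans N (rtrans M R) := by
  simp only [rtrans_eq_gtrans_transpose, transpose_mul, gtrans_mul]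

lemma gtrans_one [Fintype D] [DecidableEq D] (G : (Fin n → D) → ℂ) :
    gtrans (1 : Matrix D D ℂ) G = G := by
  funext s
  simp [gtrans, one_apply, Finset.prod_boole, ← funext_iff]

lemma rtrans_one [Fintype D] [DecidableEq D] (R : (Fin n → D) → ℂ) :
    rtrans (1 : Matrix D D ℂ) R = R := by
  rw [rtrans_eq_gtrans_transpose, transpose_one, gtrans_one]

end Transforms

section Restriction

variable {n k : ℕ}

lemma subM_apply {D : Type*} (M : Matrix D (Fin k) ℂ) (σ τ : Fin k) (d : D) (c : Fin 2) :
    subM M σ τ d c = if c = 0 then M d σ else M d τ := rfl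

lemma restrict_rtrans {D : Type*} [Fintype D] (M : Matrix D (Fin k) ℂ)
    (S : (Fin n → D) → ℂ) (σ τ : Fin k) :
    restrict (rtrans M S) σ τ = rtrans (subM M σ τ) S := by
  funext j
  simp only [restrict, rtrans, subM_apply, apply_ite]

lemma restrict_eq_gtrans (G : (Fin n → Fin k) → ℂ) (σ τ : Fin k) :
    restrict G σ τ = gtrans (subM 1 σ τ)ᵀ G := by
  funext j
  rw [gtrans, Fintype.sum_eq_single (fun t => if j t = 0 then σ else τ)]
  · have hdiag : ∀ t, (subM 1 σ τ)ᵀ (j t) (if j t = 0 then σ else τ) = 1 := fun t => by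
      split_ifs with h <;> simp [subM_apply, h]
    simp only [hdiag, Finset.prod_const_one, one_mul, restrict]
  · intro i hi
    obtain ⟨t, ht⟩ := Function.ne_iff.mp hi
    rw [Finset.prod_eq_zero (Finset.mem_univ t), zero_mul]
    simp only [transpose_apply, subM_apply, one_apply]
    split_ifs at ht ⊢ <;> simp_all

lemma projMat_eq_transpose_subM_one (hk : 2 ≤ k) :
    projMat k = (subM (1 : Matrix (Fin k) (Fin k) ℂ) ⟨0, by omega⟩ ⟨1, by omega⟩)ᵀ := by
  ext r c
  simp only [transpose_apply, subM_apply, one_apply, projMat, of_apply]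
  fin_cases r <;> simp [Fin.ext_iff, eq_comm]

lemma subM_projMat (hk : 2 ≤ k) :
    subM (projMat k) ⟨0, by omega⟩ ⟨1, by omega⟩ = 1 := by
  ext r c
  fin_cases r <;> fin_cases c <;> simp [projMat, subM_apply]

lemma restrict_rtrans_projMat (hk : 2 ≤ k) (S : (Fin n → Fin 2) → ℂ) :
    restrict (rtrans (projMat k) S) ⟨0, by omega⟩ ⟨1, by omega⟩ = S := by
  rw [restrict_rtrans, subM_projMat hk, rtrans_one]

lemma gtrans_projMat (hk : 2 ≤ k) (G : (Fin n → Fin k) → ℂ) :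
    gtrans (projMat k) G = restrict G ⟨0, by omega⟩ ⟨1, by omega⟩ := by
  rw [projMat_eq_transpose_subM_one hk, restrict_eq_gtrans]

end Restriction

/-- If the checked signatures `Ř_i`, `Ǧ_j` are simultaneously
realizable on a `2^ℓ × 2` basis `M_{(2)}` of rank 2, then the original
signatures are simultaneously realizable on `M_{(2)} X_{σ,τ}`. -/
theorem lift_realizability {k ℓ n r g : ℕ} (hk : 3 ≤ k)
    (R : Fin r → (Fin n → Fin k) → ℂ)
    (G : Fin g → (Fin n → Fin k) → ℂ)
    (R0 : Fin r → (Fin n → Fin (2 ^ ℓ)) → ℂ)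
    (G0 : Fin g → (Fin n → Fin (2 ^ ℓ)) → ℂ)
    (σ τ : Fin k)
    (X : Matrix (Fin 2) (Fin k) ℂ)
    (hRX : ∀ i, R i = rtrans X (restrict (R i) σ τ))
    (X' : Matrix (Fin k) (Fin k) ℂ) (hinv : IsUnit X'.det)
    (hXX' : X * X' = projMat k)
    (M2 : Matrix (Fin (2 ^ ℓ)) (Fin 2) ℂ)
    (hRch : ∀ i, restrict (rtrans X' (R i)) ⟨0, by omega⟩ ⟨1, by omega⟩ =
        rtrans M2 (R0 i))
    (hGch : ∀ j, gtrans M2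
        (restrict (gtrans X'⁻¹ (G j)) ⟨0, by omega⟩ ⟨1, by omega⟩) = G0 j) :
    (∀ i, R i = rtrans (M2 * X) (R0 i)) ∧
    (∀ j, gtrans (M2 * X) (G j) = G0 j) := by
  have hX : X = projMat k * X'⁻¹ := by
    rw [← hXX', Matrix.mul_assoc, mul_nonsing_inv X' hinv, Matrix.mul_one]
  have hRres : ∀ i, restrict (R i) σ τ = rtrans M2 (R0 i) := fun i =>
    calc restrict (R i) σ τ
        = restrict (rtrans (X * X') (restrict (R i) σ τ)) ⟨0, by omega⟩ ⟨1, by omega⟩ := by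
          rw [hXX', restrict_rtrans_projMat (by omega)]
      _ = rtrans M2 (R0 i) := by rw [rtrans_mul, ← hRX i, hRch i]
  refine ⟨fun i => ?_, fun j => ?_⟩
  · rw [rtrans_mul, ← hRres i, ← hRX i]
  · rw [gtrans_mul, hX, gtrans_mul, gtrans_projMat (by omega), hGch j]
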